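/- Let c ∈ ℝ and let N : ℕ → ℕ satisfy N(d) > d for all d and (N(d) - 2d)/√d → c as d → ∞. Then P_{d,N(d)} → Φ(-c/√2) as d → ∞, and this limit lies in the open interval (0,1). -/

import Mathlib

open Filter Finset Real Topology

/-- The Wendel probability `P_{d,N} = 2^{1-N} · Σ_{i=0}^{d-1} C(N-1, i)`. -/
noncomputable def wendelP (d N : ℕ) : ℝ :=
  (∑ i ∈ Finset.range d, ((N - 1).choose i : ℝ)) / 2 ^ (N - 1)

/-- The cumulative distribution function `Φ` of the standard normal distribution. -/
noncomputable def stdNormalCDF (x : ℝ) : ℝ :=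
  (Real.sqrt (2 * Real.pi))⁻¹ * ∫ t in Set.Iic x, Real.exp (-t ^ 2 / 2)

section WendelAux
open MeasureTheory intervalIntegral


lemma ftc_core (k j : ℕ) (p : ℝ) :
    ∫ t in (0:ℝ)..p, (((k:ℝ)+1) * (t^k * (1-t)^(j+1)) - ((j:ℝ)+1) * (t^(k+1) * (1-t)^j))
      = p^(k+1) * (1-p)^(j+1) := by
  have h : ∀ t : ℝ, HasDerivAt (fun t : ℝ => t^(k+1) * (1-t)^(j+1))
      (((k:ℝ)+1) * (t^k * (1-t)^(j+1)) - ((j:ℝ)+1) * (t^(k+1) * (1-t)^j)) t := by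
    intro t
    have h1 : HasDerivAt (fun t : ℝ => t^(k+1)) (((k:ℝ)+1) * t^k) t := by
      simpa using hasDerivAt_pow (k+1) t
    have h2 : HasDerivAt (fun t : ℝ => (1-t)^(j+1)) (((j:ℝ)+1) * (1-t)^j * (-1)) t := by
      have := (((hasDerivAt_id t).const_sub 1).pow (j+1))
      refine this.congr_deriv ?_
      simp
    have := h1.mul h2
    refine this.congr_deriv ?_
    ring
  rw [intervalIntegral.integral_eq_sub_of_hasDerivAt (fun t _ => h t)
    (by apply Continuous.intervalIntegrable; continuity)]
  simp

lemma ident (n : ℕ) (k : ℕ) (hk : k < n) (p : ℝ) :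
    ∑ i ∈ Finset.range (k+1), (n.choose i : ℝ) * p^i * (1-p)^(n-i)
      = 1 - ((n:ℝ) - k) * (n.choose k) * ∫ t in (0:ℝ)..p, t^k * (1-t)^(n-1-k) := by
  induction k with
  | zero =>
    have h : ∀ t : ℝ, HasDerivAt (fun t : ℝ => -(1-t)^n) ((n:ℝ) * (1-t)^(n-1)) t := by
      intro t
      have := (((hasDerivAt_id t).const_sub 1).pow n).neg
      refine this.congr_deriv ?_
      simp
    have hint : ∫ t in (0:ℝ)..p, (n:ℝ) * (1-t)^(n-1) = -(1-p)^n + 1 := by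
      rw [intervalIntegral.integral_eq_sub_of_hasDerivAt (fun t _ => h t)
        (by apply Continuous.intervalIntegrable; continuity)]
      ring
    rw [intervalIntegral.integral_const_mul] at hint
    simp only [zero_add, Finset.sum_range_one, Nat.choose_zero_right, Nat.cast_one, pow_zero,
      one_mul, Nat.sub_zero, Nat.cast_zero, sub_zero, mul_one]
    linarith [hint]
  | succ k ih =>
    have hk' : k < n := Nat.lt_of_succ_lt hk
    rw [Finset.sum_range_succ, ih hk']
    have hcast : ((n:ℝ) - k) * (n.choose k) = ((k:ℝ)+1) * (n.choose (k+1)) := by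
      have h2 := congrArg (Nat.cast (R := ℝ)) (Nat.choose_succ_right_eq n k)
      push_cast [Nat.cast_sub hk'.le] at h2
      linarith [h2]
    have hftc := ftc_core k (n-1-(k+1)) p
    have hi1 : IntervalIntegrable (fun t : ℝ => t^k * (1-t)^(n-1-(k+1)+1)) volume 0 p := by
      apply Continuous.intervalIntegrable; continuity
    have hi2 : IntervalIntegrable (fun t : ℝ => t^(k+1) * (1-t)^(n-1-(k+1))) volume 0 p := by
      apply Continuous.intervalIntegrable; continuity
    rw [intervalIntegral.integral_sub (hi1.const_mul _) (hi2.const_mul _),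
      intervalIntegral.integral_const_mul, intervalIntegral.integral_const_mul] at hftc
    have hc : ((n - 1 - (k+1) : ℕ) : ℝ) = (n:ℝ) - ↑k - 2 := by
      have h3 : n - 1 - (k+1) = n - (k+2) := by omega
      rw [h3, Nat.cast_sub (by omega)]
      push_cast; ring
    rw [hc] at hftc
    have e1 : n - 1 - k = n - 1 - (k+1) + 1 := by omega
    have e2 : n - (k+1) = n - 1 - (k+1) + 1 := by omega
    rw [e1, e2]
    set I1 := ∫ t in (0:ℝ)..p, t^k * (1-t)^(n-1-(k+1)+1) with hI1
    set I2 := ∫ t in (0:ℝ)..p, t^(k+1) * (1-t)^(n-1-(k+1)) with hI2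
    push_cast
    linear_combination (-(n.choose (k+1):ℝ)) * hftc - I1 * hcast


lemma beta_pos_denom (n k : ℕ) (hk : k < n) :
    ((n:ℝ) - k) * (n.choose k) * (∫ t in (0:ℝ)..1, t^k*(1-t)^(n-1-k)) = 1 := by
  have h1 := ident n k hk 1
  have hz : ∑ i ∈ Finset.range (k+1), (n.choose i : ℝ) * 1^i * (1-(1:ℝ))^(n-i) = 0 := by
    apply Finset.sum_eq_zero
    intro i hi
    have : n - i ≠ 0 := by have := Finset.mem_range.mp hi; omega
    simp [zero_pow this]
  rw [hz] at h1
  linarith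

lemma wendel_eq_ratio (n k : ℕ) (hk : k < n) :
    (∑ i ∈ Finset.range (k+1), (n.choose i : ℝ)) / 2^n
      = (∫ t in (1/2:ℝ)..1, t^k*(1-t)^(n-1-k)) / ∫ t in (0:ℝ)..1, t^k*(1-t)^(n-1-k) := by
  have hden := beta_pos_denom n k hk
  have h2 := ident n k hk (1/2)
  have hhalf : ∀ i ∈ Finset.range (k+1),
      (n.choose i : ℝ) * (1/2)^i * (1-(1/2:ℝ))^(n-i) = (n.choose i : ℝ) * (1/2)^n := by
    intro i hi
    have hin : i + (n - i) = n := by have := Finset.mem_range.mp hi; omega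
    rw [show (1-(1/2:ℝ)) = 1/2 by norm_num, mul_assoc, ← pow_add, hin]
  rw [Finset.sum_congr rfl hhalf, ← Finset.sum_mul] at h2
  have hsplit : (∫ t in (0:ℝ)..1, t^k*(1-t)^(n-1-k))
      = (∫ t in (0:ℝ)..(1/2), t^k*(1-t)^(n-1-k)) + ∫ t in (1/2:ℝ)..1, t^k*(1-t)^(n-1-k) := by
    rw [intervalIntegral.integral_add_adjacent_intervals] <;>
      · apply Continuous.intervalIntegrable
        exact (continuous_pow k).mul ((continuous_const.sub continuous_id).pow _)
  have hpow : ((1:ℝ)/2)^n = 1/2^n := by rw [div_pow, one_pow]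
  rw [hpow] at h2
  have hdenne : (∫ t in (0:ℝ)..1, t^k*(1-t)^(n-1-k)) ≠ 0 := by
    intro h; rw [h, mul_zero] at hden; norm_num at hden
  rw [eq_div_iff hdenne]
  linear_combination (∫ t in (0:ℝ)..1, t^k*(1-t)^(n-1-k)) * h2 + hsplit
    - (∫ t in (0:ℝ)..(1/2), t^k*(1-t)^(n-1-k)) * hden


lemma loglem (x : ℝ) (hx : |x| ≤ 1/2) : |Real.log (1-x) + x + x^2/2| ≤ 2*|x|^3 := by
  have h1 : |x| < 1 := lt_of_le_of_lt hx (by norm_num)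
  have key := Real.abs_log_sub_add_sum_range_le h1 2
  have hs : ∑ i ∈ Finset.range 2, x^(i+1)/((i:ℝ)+1) = x + x^2/2 := by
    simp [Finset.sum_range_succ]
    norm_num
  rw [hs] at key
  norm_num at key
  have h3 : (0:ℝ) ≤ |x|^3 := by positivity
  have h2 : |x|^3/(1-|x|) ≤ 2*|x|^3 := by
    rw [div_le_iff₀ (by linarith)]
    nlinarith [mul_nonneg h3 (by linarith : (0:ℝ) ≤ 1 - 2*|x|)]
  calc |Real.log (1-x) + x + x^2/2| = |x + x^2/2 + Real.log (1-x)| := by ring_nf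
    _ ≤ |x|^3/(1-|x|) := key
    _ ≤ 2*|x|^3 := h2

lemma phi_bound_aux (k j : ℕ) (s A u : ℝ) (hs : 0 < s) (hj3 : s^2/3 ≤ (j:ℝ))
    (hkj : |(k:ℝ) - j| ≤ A * s) (hjk : j ≤ k) (hu : |u| ≤ s) :
    (1+u/s)^k * (1-u/s)^j ≤ Real.exp (A*|u|) * Real.exp (-(u^2/3)) := by
  have hu1 : -s ≤ u := neg_le_of_abs_le hu
  have hu2 : u ≤ s := le_of_abs_le hu
  set x := u/s with hxdef
  have hx1 : -1 ≤ x := by rw [hxdef, neg_le, ← neg_div]; exact (div_le_one hs).mpr (by linarith)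
  have hx2 : x ≤ 1 := (div_le_one hs).mpr hu2
  have h1x : (0:ℝ) ≤ 1 - x := by linarith
  have h1x' : (0:ℝ) ≤ 1 + x := by linarith
  have hxsq : x^2 = u^2/s^2 := by rw [hxdef]; ring
  have habs : |x| = |u|/s := by rw [hxdef, abs_div, abs_of_pos hs]
  have hsq : (1-x^2) ≤ Real.exp (-(x^2)) := by
    have := Real.add_one_le_exp (-(x^2)); linarith
  have hsqnn : (0:ℝ) ≤ 1 - x^2 := by nlinarith
  set r := k - j with hrdef
  have e : k = j + r := by omega
  have hsplitpow : (1+x)^k * (1-x)^j = (1-x^2)^j * (1+x)^r := by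
    rw [e, pow_add]
    rw [show (1:ℝ)-x^2 = (1+x)*(1-x) from by ring, mul_pow]
    ring
  rw [hsplitpow]
  have hs2 : (0:ℝ) < s^2 := by positivity
  have hb1 : (1-x^2)^j ≤ Real.exp (-(u^2/3)) := by
    calc (1-x^2)^j ≤ (Real.exp (-(x^2)))^j := pow_le_pow_left₀ hsqnn hsq j
      _ = Real.exp (j * -(x^2)) := (Real.exp_nat_mul _ j).symm
      _ ≤ Real.exp (-(u^2/3)) := by
          apply Real.exp_le_exp.mpr
          rw [hxsq]
          have h5 : (s^2/3) * (u^2/s^2) ≤ (j:ℝ) * (u^2/s^2) :=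
            mul_le_mul_of_nonneg_right hj3 (by positivity)
          have h6 : (s^2/3) * (u^2/s^2) = u^2/3 := by field_simp
          linarith
  have hb2 : (1+x)^r ≤ Real.exp (A*|u|) := by
    calc (1+x)^r ≤ (Real.exp x)^r := by
          apply pow_le_pow_left₀ h1x'
          have := Real.add_one_le_exp x; linarith
      _ = Real.exp ((r:ℕ) * x) := (Real.exp_nat_mul _ _).symm
      _ ≤ Real.exp (A*|u|) := by
          apply Real.exp_le_exp.mpr
          have hc : ((r:ℕ):ℝ) = (k:ℝ) - j := by rw [hrdef, Nat.cast_sub hjk]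
          rw [hc]
          calc ((k:ℝ)-j) * x ≤ |((k:ℝ)-j) * x| := le_abs_self _
            _ = |(k:ℝ)-j| * |x| := abs_mul _ _
            _ ≤ (A*s) * (|u|/s) := by
                apply mul_le_mul hkj (le_of_eq habs) (abs_nonneg x)
                exact le_trans (abs_nonneg _) hkj
            _ = A * |u| := by field_simp
  calc (1-x^2)^j * (1+x)^r ≤ Real.exp (-(u^2/3)) * Real.exp (A*|u|) :=
        mul_le_mul hb1 hb2 (by positivity) (Real.exp_nonneg _)
    _ = Real.exp (A*|u|) * Real.exp (-(u^2/3)) := mul_comm _ _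

lemma phi_bound (k j : ℕ) (s A u : ℝ) (hs : 0 < s)
    (hk3 : s^2/3 ≤ (k:ℝ)) (hj3 : s^2/3 ≤ (j:ℝ)) (hkj : |(k:ℝ) - j| ≤ A * s)
    (hu : |u| ≤ s) :
    (1+u/s)^k * (1-u/s)^j ≤ Real.exp (A*|u|) * Real.exp (-(u^2/3)) := by
  rcases le_total j k with hjk | hjk
  · exact phi_bound_aux k j s A u hs hj3 hkj hjk hu
  · have h := phi_bound_aux j k s A (-u) hs hk3 (by rwa [abs_sub_comm]) hjk (by rwa [abs_neg])
    calc (1+u/s)^k * (1-u/s)^j = (1+(-u)/s)^j * (1-(-u)/s)^k := by rw [neg_div]; ring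
      _ ≤ Real.exp (A*|(-u)|) * Real.exp (-((-u)^2/3)) := h
      _ = Real.exp (A*|u|) * Real.exp (-(u^2/3)) := by rw [abs_neg, neg_sq]


lemma phi_tendsto (k j : ℕ → ℕ) (a u : ℝ)
    (hn : Tendsto (fun d => ((k d:ℝ)+ j d + 1)) atTop atTop)
    (H1 : Tendsto (fun d => ((k d:ℝ) - j d)/Real.sqrt ((k d:ℝ)+j d+1)) atTop (𝓝 a)) :
    Tendsto (fun d => (1+u/Real.sqrt ((k d:ℝ)+j d+1))^(k d)
        * (1-u/Real.sqrt ((k d:ℝ)+j d+1))^(j d))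
      atTop (𝓝 (Real.exp (a*u - u^2/2))) := by
  set n : ℕ → ℝ := fun d => (k d:ℝ)+j d+1 with hn_def
  set s : ℕ → ℝ := fun d => Real.sqrt (n d) with hs_def
  have hnpos : ∀ d, 0 < n d := fun d => by positivity
  have hspos : ∀ d, 0 < s d := fun d => Real.sqrt_pos.mpr (hnpos d)
  have hssq : ∀ d, (s d)^2 = n d := fun d => Real.sq_sqrt (hnpos d).le
  have hs_top : Tendsto s atTop atTop := by
    rw [tendsto_atTop]
    intro b
    filter_upwards [hn.eventually_ge_atTop (b^2)] with d hd
    calc b ≤ |b| := le_abs_self b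
      _ = Real.sqrt (b^2) := (Real.sqrt_sq_eq_abs b).symm
      _ ≤ s d := Real.sqrt_le_sqrt hd
  set x : ℕ → ℝ := fun d => u / s d with hx_def
  have hx0 : Tendsto x atTop (𝓝 0) := tendsto_const_nhds.div_atTop hs_top
  have hxsmall : ∀ᶠ d in atTop, |x d| ≤ 1/2 := by
    have := hx0.abs
    rw [abs_zero] at this
    exact this.eventually_le_const (by norm_num)
  -- main term convergence
  have hM1 : Tendsto (fun d => ((k d:ℝ) - j d) * x d) atTop (𝓝 (a*u)) := by
    have : ∀ d, ((k d:ℝ) - j d) * x d = (((k d:ℝ) - j d)/ s d) * u := fun d => by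
      rw [hx_def]; ring
    rw [tendsto_congr this]
    exact H1.mul_const u
  have hM2 : Tendsto (fun d => ((k d:ℝ) + j d) * (x d)^2/2) atTop (𝓝 (u^2/2)) := by
    have heq : ∀ d, ((k d:ℝ) + j d) * (x d)^2/2 = (1 - 1/(n d)) * (u^2/2) := fun d => by
      have h1 : (x d)^2 = u^2/(n d) := by
        rw [hx_def]
        simp only [div_pow]
        rw [hssq d]
      have h2 : ((k d:ℝ) + j d) = n d - 1 := by rw [hn_def]; ring
      rw [h1, h2]
      have hne : n d ≠ 0 := ne_of_gt (hnpos d)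
      field_simp
    rw [tendsto_congr heq]
    have h2 : Tendsto (fun d => 1 - 1/(n d)) atTop (𝓝 1) := by
      have := hn.inv_tendsto_atTop
      have h3 : Tendsto (fun d => 1 - (n d)⁻¹) atTop (𝓝 (1 - 0)) := tendsto_const_nhds.sub this
      simpa [one_div] using h3
    have := h2.mul_const (u^2/2)
    simpa using this
  -- remainder
  set E : ℕ → ℝ := fun d => (k d:ℝ) * Real.log (1+x d) + (j d:ℝ) * Real.log (1-x d) with hE_def
  set M : ℕ → ℝ := fun d => ((k d:ℝ) - j d) * x d - ((k d:ℝ) + j d) * (x d)^2/2 with hM_def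
  have hR : Tendsto (fun d => E d - M d) atTop (𝓝 0) := by
    apply squeeze_zero_norm' (a := fun d => 2 * |u|^3 / s d)
    · filter_upwards [hxsmall] with d hxd
      have l1 := loglem (x d) hxd
      have l2 := loglem (-(x d)) (by rwa [abs_neg])
      rw [sub_neg_eq_add, neg_sq, abs_neg] at l2
      have expand : E d - M d
          = (k d:ℝ) * (Real.log (1+x d) + (-(x d)) + (x d)^2/2)
            + (j d:ℝ) * (Real.log (1-x d) + x d + (x d)^2/2) := by
        rw [hE_def, hM_def]; ring
      have knn : (0:ℝ) ≤ (k d:ℝ) := Nat.cast_nonneg _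
      have jnn : (0:ℝ) ≤ (j d:ℝ) := Nat.cast_nonneg _
      have habs3 : |x d|^3 = |u|^3/(s d)^3 := by
        rw [hx_def]
        simp only [abs_div, abs_of_pos (hspos d)]
        rw [div_pow]
      have hb : ‖E d - M d‖ ≤ ((k d:ℝ) + j d) * (2*|x d|^3) := by
        rw [expand, Real.norm_eq_abs]
        calc |(k d:ℝ) * (Real.log (1+x d) + (-(x d)) + (x d)^2/2)
              + (j d:ℝ) * (Real.log (1-x d) + x d + (x d)^2/2)|
            ≤ (k d:ℝ) * |Real.log (1+x d) + (-(x d)) + (x d)^2/2|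
              + (j d:ℝ) * |Real.log (1-x d) + x d + (x d)^2/2| := by
              calc _ ≤ |(k d:ℝ) * (Real.log (1+x d) + (-(x d)) + (x d)^2/2)|
                  + |(j d:ℝ) * (Real.log (1-x d) + x d + (x d)^2/2)| := abs_add_le _ _
                _ = _ := by rw [abs_mul, abs_mul, abs_of_nonneg knn, abs_of_nonneg jnn]
          _ ≤ (k d:ℝ) * (2*|x d|^3) + (j d:ℝ) * (2*|x d|^3) := by
              apply add_le_add
              · exact mul_le_mul_of_nonneg_left l2 knn
              · exact mul_le_mul_of_nonneg_left l1 jnn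
          _ = ((k d:ℝ) + j d) * (2*|x d|^3) := by ring
      apply hb.trans
      rw [habs3]
      have hkjn : (k d:ℝ) + j d ≤ n d := by rw [hn_def]; simp
      have hs3 : (0:ℝ) < (s d)^3 := by positivity
      calc ((k d:ℝ) + j d) * (2*(|u|^3/(s d)^3)) ≤ (s d)^2 * (2*(|u|^3/(s d)^3)) := by
            apply mul_le_mul_of_nonneg_right _ (by positivity)
            rw [hssq d]
            exact hkjn
        _ = 2 * |u|^3 / s d := by
            field_simp
    · apply Tendsto.div_atTop tendsto_const_nhds hs_top
  -- E tendsto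
  have hE : Tendsto E atTop (𝓝 (a*u - u^2/2)) := by
    have hM : Tendsto M atTop (𝓝 (a*u - u^2/2)) := by
      rw [hM_def]
      exact hM1.sub hM2
    have := hM.add hR
    simpa using this
  -- conclude
  have hphiE : ∀ᶠ d in atTop, (1+u/Real.sqrt ((k d:ℝ)+j d+1))^(k d)
      * (1-u/Real.sqrt ((k d:ℝ)+j d+1))^(j d) = Real.exp (E d) := by
    filter_upwards [hxsmall] with d hxd
    have h1 : (0:ℝ) < 1 + x d := by
      have := abs_le.mp hxd; linarith [this.1]
    have h2 : (0:ℝ) < 1 - x d := by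
      have := abs_le.mp hxd; linarith [this.2]
    rw [hE_def]
    rw [Real.exp_add, Real.exp_nat_mul, Real.exp_nat_mul, Real.exp_log h1, Real.exp_log h2]
  rw [show (fun d => (1+u/Real.sqrt ((k d:ℝ)+j d+1))^(k d)
      * (1-u/Real.sqrt ((k d:ℝ)+j d+1))^(j d)) = fun d => (1+x d)^(k d) * (1-x d)^(j d) from rfl]
  apply Tendsto.congr' _ (Real.continuous_exp.continuousAt.tendsto.comp hE)
  filter_upwards [hphiE] with d hd
  exact hd.symm


lemma conv (k j : ℕ → ℕ) (a : ℝ) (S : Set ℝ)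
    (hn : Tendsto (fun d => ((k d:ℝ)+j d+1)) atTop atTop)
    (H1 : Tendsto (fun d => ((k d:ℝ)-j d)/Real.sqrt ((k d:ℝ)+j d+1)) atTop (𝓝 a))
    (H2 : Tendsto (fun d => (k d:ℝ)/((k d:ℝ)+j d+1)) atTop (𝓝 (1/2))) :
    Tendsto (fun d => ∫ u in S,
        (Set.Ioc (-Real.sqrt ((k d:ℝ)+j d+1)) (Real.sqrt ((k d:ℝ)+j d+1))).indicator
          (fun u => (1+u/Real.sqrt ((k d:ℝ)+j d+1))^(k d)
            * (1-u/Real.sqrt ((k d:ℝ)+j d+1))^(j d)) u)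
      atTop (𝓝 (∫ u in S, Real.exp (a*u - u^2/2))) := by
  set n : ℕ → ℝ := fun d => (k d:ℝ)+j d+1 with hn_def
  set s : ℕ → ℝ := fun d => Real.sqrt (n d) with hs_def
  have hnpos : ∀ d, 0 < n d := fun d => by positivity
  have hspos : ∀ d, 0 < s d := fun d => Real.sqrt_pos.mpr (hnpos d)
  have hssq : ∀ d, (s d)^2 = n d := fun d => Real.sq_sqrt (hnpos d).le
  have hs_top : Tendsto s atTop atTop := by
    rw [tendsto_atTop]
    intro b
    filter_upwards [hn.eventually_ge_atTop (b^2)] with d hd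
    calc b ≤ |b| := le_abs_self b
      _ = Real.sqrt (b^2) := (Real.sqrt_sq_eq_abs b).symm
      _ ≤ s d := Real.sqrt_le_sqrt hd
  set A : ℝ := |a| + 1 with hA_def
  have hApos : 0 < A := by rw [hA_def]; positivity
  clear_value A
  -- eventual bounds
  have Ev1 : ∀ᶠ d in atTop, |(k d:ℝ) - j d| ≤ A * s d := by
    have h := (H1.abs).eventually_le_const (show |a| < A by rw [hA_def]; linarith)
    filter_upwards [h] with d hd
    have hsp : (0:ℝ) < Real.sqrt ((k d:ℝ)+j d+1) := hspos d
    rw [abs_div, abs_of_pos hsp, div_le_iff₀ hsp] at hd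
    exact hd
  have Ev2 : ∀ᶠ d in atTop, (s d)^2/3 ≤ (k d:ℝ) := by
    have h := H2.eventually_const_le (show (1:ℝ)/3 < 1/2 by norm_num)
    filter_upwards [h] with d hd
    have hnd : n d = (k d:ℝ)+j d+1 := rfl
    rw [hssq d, hnd]
    rw [le_div_iff₀ (show (0:ℝ) < (k d:ℝ)+j d+1 from hnpos d)] at hd
    linarith
  have hj2 : Tendsto (fun d => (j d:ℝ)/(n d)) atTop (𝓝 (1/2)) := by
    have heq : ∀ d, (j d:ℝ)/(n d) = 1 - (k d:ℝ)/(n d) - 1/(n d) := fun d => by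
      have hne : n d ≠ 0 := ne_of_gt (hnpos d)
      field_simp
      rw [hn_def]
      ring
    rw [tendsto_congr heq]
    have h0 : Tendsto (fun d => 1/(n d)) atTop (𝓝 0) := by
      simpa [one_div, Pi.inv_def] using hn.inv_tendsto_atTop
    have hsub : Tendsto (fun d => 1 - (k d:ℝ)/(n d) - 1/(n d)) atTop (𝓝 (1 - 1/2 - 0)) :=
      Tendsto.sub (Tendsto.sub tendsto_const_nhds H2) h0
    have hval : (1:ℝ) - 1/2 - 0 = 1/2 := by norm_num
    rw [hval] at hsub
    exact hsub
  have Ev3 : ∀ᶠ d in atTop, (s d)^2/3 ≤ (j d:ℝ) := by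
    have h := hj2.eventually_const_le (show (1:ℝ)/3 < 1/2 by norm_num)
    filter_upwards [h] with d hd
    have hnd : n d = (k d:ℝ)+j d+1 := rfl
    rw [hssq d, hnd]
    rw [hnd, le_div_iff₀ (show (0:ℝ) < (k d:ℝ)+j d+1 from hnpos d)] at hd
    linarith
  -- DCT
  have key := MeasureTheory.tendsto_integral_filter_of_dominated_convergence
    (μ := (volume : Measure ℝ).restrict S)
    (F := fun d => (Set.Ioc (-(s d)) (s d)).indicator
      (fun u => (1+u/(s d))^(k d) * (1-u/(s d))^(j d)))
    (f := fun u => Real.exp (a*u - u^2/2))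
    (bound := fun u => Real.exp ((3/2)*A^2) * Real.exp (-(1/6)*u^2))
    (by -- measurability
      apply Filter.Eventually.of_forall
      intro d
      apply AEStronglyMeasurable.restrict
      apply AEStronglyMeasurable.indicator _ measurableSet_Ioc
      apply Continuous.aestronglyMeasurable
      fun_prop)
    (by -- bound
      filter_upwards [Ev1, Ev2, Ev3] with d h1 h2 h3
      apply MeasureTheory.ae_restrict_of_ae
      apply Filter.Eventually.of_forall
      intro u
      by_cases hu : u ∈ Set.Ioc (-(s d)) (s d)
      · rw [Set.indicator_of_mem hu]
        have hu2 : |u| ≤ s d := abs_le.mpr ⟨hu.1.le, hu.2⟩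
        have hx1 : (0:ℝ) ≤ 1 + u/(s d) := by
          have : -1 ≤ u/(s d) := by
            rw [neg_le, ← neg_div]
            exact (div_le_one (hspos d)).mpr (by linarith [hu.1])
          linarith
        have hx2 : (0:ℝ) ≤ 1 - u/(s d) := by
          have : u/(s d) ≤ 1 := (div_le_one (hspos d)).mpr hu.2
          linarith
        have hphinn : (0:ℝ) ≤ (1+u/(s d))^(k d) * (1-u/(s d))^(j d) :=
          mul_nonneg (pow_nonneg hx1 _) (pow_nonneg hx2 _)
        rw [Real.norm_eq_abs, abs_of_nonneg hphinn]
        calc (1+u/(s d))^(k d) * (1-u/(s d))^(j d)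
            ≤ Real.exp (A*|u|) * Real.exp (-(u^2/3)) :=
              phi_bound (k d) (j d) (s d) A u (hspos d) h2 h3 h1 hu2
          _ ≤ Real.exp ((3/2)*A^2) * Real.exp (-(1/6)*u^2) := by
              rw [← Real.exp_add, ← Real.exp_add]
              apply Real.exp_le_exp.mpr
              have e := sq_nonneg (|u| - 3*A)
              rw [sub_sq, sq_abs] at e
              linarith
      · rw [Set.indicator_of_notMem hu]
        simp only [norm_zero]
        positivity)
    (by -- integrable bound
      apply Integrable.restrict
      exact (integrable_exp_neg_mul_sq (by norm_num : (0:ℝ) < 1/6)).const_mul _)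
    (by -- ae convergence
      apply MeasureTheory.ae_restrict_of_ae
      apply Filter.Eventually.of_forall
      intro u
      have hev : ∀ᶠ d in atTop, u ∈ Set.Ioc (-(s d)) (s d) := by
        filter_upwards [hs_top.eventually_gt_atTop (|u|)] with d hd
        constructor
        · have := neg_abs_le u; linarith
        · linarith [le_abs_self u]
      apply Tendsto.congr' _ (phi_tendsto k j a u hn H1)
      filter_upwards [hev] with d hd
      rw [Set.indicator_of_mem hd])
  simpa using key


noncomputable def gaussLim (a : ℝ) (u : ℝ) : ℝ := Real.exp (a*u - u^2/2)

lemma gauss_integrable (a : ℝ) : Integrable (gaussLim a) := by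
  have h : Integrable (fun v : ℝ => Real.exp (-(1/2) * v^2)) :=
    integrable_exp_neg_mul_sq (by norm_num)
  have h2 : Integrable (fun u : ℝ => Real.exp (-(1/2) * (u - a)^2)) := by
    exact h.comp_sub_right a
  have h3 := h2.const_mul (Real.exp (a^2/2))
  apply h3.congr
  apply Filter.Eventually.of_forall
  intro u
  simp only [gaussLim, ← Real.exp_add]
  ring_nf
lemma gauss_total : ∫ v : ℝ, Real.exp (-v^2/2) = Real.sqrt (2*Real.pi) := by
  have := integral_gaussian (1/2)
  rw [show (fun x : ℝ => Real.exp (-(1/2) * x^2)) = fun v : ℝ => Real.exp (-v^2/2) from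
    funext fun v => by ring_nf] at this
  rw [this]
  rw [show Real.pi/(1/2) = 2*Real.pi from by ring]

lemma gauss_whole (a : ℝ) : ∫ u : ℝ, gaussLim a u = Real.exp (a^2/2) * Real.sqrt (2*Real.pi) := by
  have hshift : ∫ u : ℝ, Real.exp (-(u-a)^2/2) = ∫ v : ℝ, Real.exp (-v^2/2) := by
    have h0 : (fun u : ℝ => Real.exp (-(u-a)^2/2)) = fun u : ℝ => Real.exp (-(u + -a)^2/2) := by
      funext u; rw [sub_eq_add_neg]
    rw [h0]
    exact MeasureTheory.integral_add_right_eq_self (fun v : ℝ => Real.exp (-v^2/2)) (-a)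
  calc ∫ u : ℝ, gaussLim a u = ∫ u : ℝ, Real.exp (a^2/2) * Real.exp (-(u-a)^2/2) := by
        congr 1; funext u
        rw [gaussLim, ← Real.exp_add]; ring_nf
    _ = Real.exp (a^2/2) * ∫ u : ℝ, Real.exp (-(u-a)^2/2) := MeasureTheory.integral_const_mul _ _
    _ = Real.exp (a^2/2) * Real.sqrt (2*Real.pi) := by rw [hshift, gauss_total]

lemma gauss_half (a : ℝ) :
    ∫ u in Set.Ioi (0:ℝ), gaussLim a u
      = Real.exp (a^2/2) * ∫ v in Set.Iic a, Real.exp (-v^2/2) := by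
  have step1 : ∫ u in Set.Ioi (0:ℝ), gaussLim a u
      = Real.exp (a^2/2) * ∫ u in Set.Ioi (0:ℝ), Real.exp (-(u-a)^2/2) := by
    rw [← MeasureTheory.integral_const_mul]
    congr 1; funext u
    rw [gaussLim, ← Real.exp_add]; ring_nf
  have step2 : ∫ u in Set.Ioi (0:ℝ), Real.exp (-(u-a)^2/2)
      = ∫ v in Set.Ioi (-a), Real.exp (-v^2/2) := by
    rw [← MeasureTheory.integral_indicator measurableSet_Ioi, ← MeasureTheory.integral_indicator measurableSet_Ioi]
    have key : ∀ x : ℝ, (Set.Ioi (0:ℝ)).indicator (fun u => Real.exp (-(u-a)^2/2)) x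
        = (Set.Ioi (-a)).indicator (fun v => Real.exp (-v^2/2)) (x + -a) := by
      intro x
      by_cases hx : x ∈ Set.Ioi (0:ℝ)
      · rw [Set.indicator_of_mem hx, Set.indicator_of_mem (by simp at hx ⊢; linarith)]
        rw [show x + -a = x - a from by ring]
      · rw [Set.indicator_of_notMem hx, Set.indicator_of_notMem (by simp at hx ⊢; linarith)]
    rw [show (fun x => (Set.Ioi (0:ℝ)).indicator (fun u => Real.exp (-(u-a)^2/2)) x)
        = fun x => (Set.Ioi (-a)).indicator (fun v => Real.exp (-v^2/2)) (x + -a) from funext key]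
    exact MeasureTheory.integral_add_right_eq_self _ (-a)
  have step3 : ∫ v in Set.Ioi (-a), Real.exp (-v^2/2)
      = ∫ v in Set.Iic a, Real.exp (-v^2/2) := by
    rw [← MeasureTheory.integral_indicator measurableSet_Ioi, ← MeasureTheory.integral_indicator measurableSet_Iic]
    have key : ∀ x : ℝ, (Set.Ioi (-a)).indicator (fun v => Real.exp (-v^2/2)) (-x)
        = (Set.Iio a).indicator (fun v => Real.exp (-v^2/2)) x := by
      intro x
      by_cases hx : x ∈ Set.Iio a
      · rw [Set.indicator_of_mem (by simp at hx ⊢; linarith), Set.indicator_of_mem hx]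
        rw [neg_sq]
      · rw [Set.indicator_of_notMem (by simp at hx ⊢; linarith),
          Set.indicator_of_notMem hx]
    have hneg := MeasureTheory.integral_neg_eq_self
      (fun x : ℝ => (Set.Ioi (-a)).indicator (fun v => Real.exp (-v^2/2)) x) (volume : Measure ℝ)
    rw [← hneg]
    rw [show (fun x => (Set.Ioi (-a)).indicator (fun v => Real.exp (-v^2/2)) (-x))
        = fun x => (Set.Iio a).indicator (fun v => Real.exp (-v^2/2)) x from funext key]
    rw [MeasureTheory.integral_indicator measurableSet_Iio, MeasureTheory.integral_indicator measurableSet_Iic]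
    exact setIntegral_congr_set Iio_ae_eq_Iic
  rw [step1, step2, step3]

lemma gauss_Iic_pos (a : ℝ) : 0 < ∫ v in Set.Iic a, Real.exp (-v^2/2) := by
  have hint : Integrable (fun v : ℝ => Real.exp (-v^2/2)) := by
    have h := integrable_exp_neg_mul_sq (show (0:ℝ) < 1/2 by norm_num)
    apply h.congr
    apply Filter.Eventually.of_forall
    intro v; ring_nf
  have h1 : (0:ℝ) < ∫ v in (a-1)..a, Real.exp (-v^2/2) := by
    apply intervalIntegral.intervalIntegral_pos_of_pos_on
    · exact hint.intervalIntegrable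
    · intro x _; positivity
    · linarith
  have h2 : ∫ v in (a-1)..a, Real.exp (-v^2/2) ≤ ∫ v in Set.Iic a, Real.exp (-v^2/2) := by
    rw [intervalIntegral.integral_of_le (by linarith)]
    apply setIntegral_mono_set hint.integrableOn
    · apply Filter.Eventually.of_forall; intro v; positivity
    · apply Filter.Eventually.of_forall
      intro v hv
      exact hv.2
  linarith

lemma gauss_Iic_lt (a : ℝ) :
    ∫ v in Set.Iic a, Real.exp (-v^2/2) < Real.sqrt (2*Real.pi) := by
  have hint : Integrable (fun v : ℝ => Real.exp (-v^2/2)) := by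
    have h := integrable_exp_neg_mul_sq (show (0:ℝ) < 1/2 by norm_num)
    apply h.congr
    apply Filter.Eventually.of_forall
    intro v; ring_nf
  have hsplit : (∫ v in Set.Iic a, Real.exp (-v^2/2)) + ∫ v in Set.Ioi a, Real.exp (-v^2/2)
      = ∫ v : ℝ, Real.exp (-v^2/2) :=
    intervalIntegral.integral_Iic_add_Ioi hint.integrableOn hint.integrableOn
  have hpos : (0:ℝ) < ∫ v in Set.Ioi a, Real.exp (-v^2/2) := by
    have h1 : (0:ℝ) < ∫ v in a..(a+1), Real.exp (-v^2/2) := by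
      apply intervalIntegral.intervalIntegral_pos_of_pos_on
      · exact hint.intervalIntegrable
      · intro x _; positivity
      · linarith
    have h2 : ∫ v in a..(a+1), Real.exp (-v^2/2) ≤ ∫ v in Set.Ioi a, Real.exp (-v^2/2) := by
      rw [intervalIntegral.integral_of_le (by linarith)]
      apply setIntegral_mono_set hint.integrableOn
      · apply Filter.Eventually.of_forall; intro v; positivity
      · apply Filter.Eventually.of_forall
        intro v hv
        exact hv.1
    linarith
  rw [← gauss_total]
  linarith


lemma bridge (kk jj : ℕ) :
    (∫ t in (1/2:ℝ)..1, t^kk*(1-t)^jj) / (∫ t in (0:ℝ)..1, t^kk*(1-t)^jj)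
      = (∫ u in Set.Ioi (0:ℝ),
          (Set.Ioc (-(Real.sqrt ((kk:ℝ)+jj+1))) (Real.sqrt ((kk:ℝ)+jj+1))).indicator
            (fun u => (1+u/Real.sqrt ((kk:ℝ)+jj+1))^kk * (1-u/Real.sqrt ((kk:ℝ)+jj+1))^jj) u)
        / (∫ u : ℝ,
          (Set.Ioc (-(Real.sqrt ((kk:ℝ)+jj+1))) (Real.sqrt ((kk:ℝ)+jj+1))).indicator
            (fun u => (1+u/Real.sqrt ((kk:ℝ)+jj+1))^kk * (1-u/Real.sqrt ((kk:ℝ)+jj+1))^jj) u) := by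
  have hnpos : (0:ℝ) < (kk:ℝ)+jj+1 := by positivity
  set s : ℝ := Real.sqrt ((kk:ℝ)+jj+1) with hs_def
  have hs : 0 < s := Real.sqrt_pos.mpr hnpos
  have hsne : s ≠ 0 := ne_of_gt hs
  set φ : ℝ → ℝ := fun u => (1+u/s)^kk * (1-u/s)^jj with hφ_def
  set f : ℝ → ℝ := fun t => t^kk*(1-t)^jj with hf_def
  set C : ℝ := ((1:ℝ)/2)^(kk+jj) with hC_def
  have hCpos : 0 < C := by rw [hC_def]; positivity
  have hcne : (1/(2*s) : ℝ) ≠ 0 := by positivity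
  have hcong : ∀ x : ℝ, f ((1/(2*s))*x + 1/2) = C * φ x := by
    intro x
    have e1 : (1/(2*s))*x + 1/2 = (1+x/s)/2 := by field_simp; ring
    have e2 : 1 - ((1/(2*s))*x + 1/2) = (1-x/s)/2 := by field_simp; ring
    rw [hf_def]
    simp only []
    rw [e1]
    rw [show (1:ℝ) - (1+x/s)/2 = (1-x/s)/2 from by ring]
    rw [div_pow, div_pow, hC_def, hφ_def]
    simp only []
    rw [div_pow, one_pow, pow_add]
    ring
  -- numerator change of variables
  have hcomp1 := intervalIntegral.integral_comp_mul_add (a := (0:ℝ)) (b := s) f hcne (1/2)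
  rw [show (1/(2*s))*(0:ℝ) + 1/2 = (1/2:ℝ) from by ring,
    show (1/(2*s))*s + 1/2 = (1:ℝ) from by field_simp; ring] at hcomp1
  have hcomp2 := intervalIntegral.integral_comp_mul_add (a := -s) (b := s) f hcne (1/2)
  rw [show (1/(2*s))*(-s) + 1/2 = (0:ℝ) from by field_simp; ring,
    show (1/(2*s))*s + 1/2 = (1:ℝ) from by field_simp; ring] at hcomp2
  have hnum : ∫ t in (1/2:ℝ)..1, f t = (C/(2*s)) * ∫ x in (0:ℝ)..s, φ x := by
    have h1 : ∫ x in (0:ℝ)..s, f ((1/(2*s))*x + 1/2) = C * ∫ x in (0:ℝ)..s, φ x := by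
      rw [intervalIntegral.integral_congr (fun x _ => hcong x)]
      exact intervalIntegral.integral_const_mul _ _
    rw [h1] at hcomp1
    rw [smul_eq_mul] at hcomp1
    field_simp at hcomp1 ⊢
    linarith [hcomp1]
  have hden : ∫ t in (0:ℝ)..1, f t = (C/(2*s)) * ∫ x in (-s)..s, φ x := by
    have h1 : ∫ x in (-s)..s, f ((1/(2*s))*x + 1/2) = C * ∫ x in (-s)..s, φ x := by
      rw [intervalIntegral.integral_congr (fun x _ => hcong x)]
      exact intervalIntegral.integral_const_mul _ _
    rw [h1] at hcomp2
    rw [smul_eq_mul] at hcomp2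
    field_simp at hcomp2 ⊢
    linarith [hcomp2]
  have hKne : (C/(2*s)) ≠ 0 := by positivity
  have hNUM : ∫ x in (0:ℝ)..s, φ x
      = ∫ u in Set.Ioi (0:ℝ), (Set.Ioc (-s) s).indicator φ u := by
    rw [← MeasureTheory.integral_indicator measurableSet_Ioi]
    simp only [Set.indicator_indicator]
    have hset : Set.Ioi (0:ℝ) ∩ Set.Ioc (-s) s = Set.Ioc 0 s := by
      ext u
      simp only [Set.mem_inter_iff, Set.mem_Ioi, Set.mem_Ioc]
      constructor
      · rintro ⟨h1, _, h3⟩; exact ⟨h1, h3⟩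
      · rintro ⟨h1, h2⟩; exact ⟨h1, by linarith, h2⟩
    rw [hset, MeasureTheory.integral_indicator measurableSet_Ioc,
      intervalIntegral.integral_of_le hs.le]
  have hDEN : ∫ x in (-s)..s, φ x = ∫ u : ℝ, (Set.Ioc (-s) s).indicator φ u := by
    rw [MeasureTheory.integral_indicator measurableSet_Ioc,
      intervalIntegral.integral_of_le (by linarith : -s ≤ s)]
  rw [← hf_def] at *
  rw [hnum, hden, hNUM, hDEN]
  rw [show C/(2*s) * (∫ u in Set.Ioi (0:ℝ), (Set.Ioc (-s) s).indicator φ u)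
      = C/(2*s) * ∫ u in Set.Ioi (0:ℝ), (Set.Ioc (-s) s).indicator φ u from rfl]
  exact mul_div_mul_left _ _ hKne



lemma gauss_whole' (a : ℝ) :
    ∫ u : ℝ, Real.exp (a*u - u^2/2) = Real.exp (a^2/2) * Real.sqrt (2*Real.pi) := by
  simpa [gaussLim] using gauss_whole a

lemma gauss_half' (a : ℝ) :
    ∫ u in Set.Ioi (0:ℝ), Real.exp (a*u - u^2/2)
      = Real.exp (a^2/2) * ∫ v in Set.Iic a, Real.exp (-v^2/2) := by
  simpa [gaussLim] using gauss_half a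

end WendelAux


section WendelMain
open MeasureTheory


theorem wendel_critical_sqrt (c : ℝ) (N : ℕ → ℕ) (hN : ∀ d, d < N d)
    (h1 : Tendsto (fun d : ℕ => ((N d : ℝ) - 2 * d) / Real.sqrt d) atTop (𝓝 c)) :
    Tendsto (fun d : ℕ => wendelP d (N d)) atTop (𝓝 (stdNormalCDF (-c / Real.sqrt 2))) ∧
      stdNormalCDF (-c / Real.sqrt 2) ∈ Set.Ioo (0 : ℝ) 1 := by
  set a : ℝ := -c / Real.sqrt 2 with ha_def
  set kk : ℕ → ℕ := fun d => d - 1 with hkk_def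
  set jj : ℕ → ℕ := fun d => N d - d - 1 with hjj_def
  have hsqrt2 : (0:ℝ) < Real.sqrt 2 := Real.sqrt_pos.mpr (by norm_num)
  -- cast identities for d ≥ 1
  have c1 : ∀ d : ℕ, 1 ≤ d → ((kk d:ℝ)) = (d:ℝ) - 1 := fun d hd => by
    rw [hkk_def]; simp only []; rw [Nat.cast_sub hd]; norm_num
  have c2 : ∀ d : ℕ, 1 ≤ d → ((jj d:ℝ)) = (N d:ℝ) - d - 1 := fun d hd => by
    rw [hjj_def]; simp only []
    have h2 : d + 1 ≤ N d := hN d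
    rw [show N d - d - 1 = N d - (d+1) from by omega, Nat.cast_sub h2]
    push_cast; ring
  have c3 : ∀ d : ℕ, 1 ≤ d → ((kk d:ℝ) + jj d + 1) = (N d:ℝ) - 1 := fun d hd => by
    rw [c1 d hd, c2 d hd]; ring
  -- basic limits
  have hsd : Tendsto (fun d : ℕ => Real.sqrt d) atTop atTop := by
    rw [tendsto_atTop]
    intro b
    filter_upwards [(tendsto_natCast_atTop_atTop (R := ℝ)).eventually_ge_atTop (b^2)] with d hd
    calc b ≤ |b| := le_abs_self b
      _ = Real.sqrt (b^2) := (Real.sqrt_sq_eq_abs b).symm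
      _ ≤ Real.sqrt d := Real.sqrt_le_sqrt hd
  have hinv : Tendsto (fun d : ℕ => 1/Real.sqrt d) atTop (𝓝 0) := by
    simpa [one_div, Pi.inv_def] using hsd.inv_tendsto_atTop
  have hN2 : Tendsto (fun d : ℕ => ((N d:ℝ) - 2*d)/d) atTop (𝓝 0) := by
    apply Tendsto.congr' _ (by simpa using h1.mul hinv)
    filter_upwards [eventually_ge_atTop 1] with d hd
    have hdpos : (0:ℝ) < d := by exact_mod_cast hd
    have hsdpos : (0:ℝ) < Real.sqrt d := Real.sqrt_pos.mpr hdpos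
    have hss : Real.sqrt d * Real.sqrt d = (d:ℝ) := Real.mul_self_sqrt hdpos.le
    field_simp
    rw [Real.sq_sqrt hdpos.le]; ring
  have hQ : Tendsto (fun d : ℕ => ((N d:ℝ) - 1)/d) atTop (𝓝 2) := by
    have h0 : Tendsto (fun d : ℕ => ((N d:ℝ) - 2*d)/d + 2 - 1/d) atTop (𝓝 (0 + 2 - 0)) :=
      (hN2.add_const 2).sub tendsto_one_div_atTop_nhds_zero_nat
    norm_num at h0
    apply Tendsto.congr' _ h0
    filter_upwards [eventually_ge_atTop 1] with d hd
    have hdpos : (0:ℝ) < d := by exact_mod_cast hd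
    field_simp
    ring
  have hQpos : ∀ᶠ d : ℕ in atTop, (0:ℝ) < ((N d:ℝ) - 1) := by
    filter_upwards [eventually_ge_atTop 1] with d hd
    have : (d:ℝ) ≤ (N d:ℝ) - 1 := by
      have := hN d
      have : (d:ℝ) + 1 ≤ N d := by exact_mod_cast this
      linarith
    have hd1 : (1:ℝ) ≤ d := by exact_mod_cast hd
    linarith
  have hsqQ : Tendsto (fun d : ℕ => Real.sqrt (((N d:ℝ) - 1)/d)) atTop (𝓝 (Real.sqrt 2)) :=
    hQ.sqrt
  -- conv hypotheses
  have hn : Tendsto (fun d => ((kk d:ℝ)+jj d+1)) atTop atTop := by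
    apply tendsto_atTop_mono' atTop _ (tendsto_natCast_atTop_atTop (R := ℝ))
    filter_upwards [eventually_ge_atTop 1] with d hd
    rw [c3 d hd]
    have : (d:ℝ) + 1 ≤ N d := by exact_mod_cast hN d
    linarith
  have H1 : Tendsto (fun d => ((kk d:ℝ)-jj d)/Real.sqrt ((kk d:ℝ)+jj d+1)) atTop (𝓝 a) := by
    have hlim : Tendsto (fun d : ℕ => -(((N d:ℝ) - 2*d)/Real.sqrt d)/Real.sqrt (((N d:ℝ)-1)/d))
        atTop (𝓝 (-c/Real.sqrt 2)) := (h1.neg).div hsqQ (ne_of_gt hsqrt2)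
    apply Tendsto.congr' _ hlim
    filter_upwards [eventually_ge_atTop 1, hQpos] with d hd hQp
    have hdpos : (0:ℝ) < d := by exact_mod_cast hd
    have hsdpos : (0:ℝ) < Real.sqrt d := Real.sqrt_pos.mpr hdpos
    rw [c3 d hd, c1 d hd, c2 d hd]
    have hsq : Real.sqrt (((N d:ℝ)-1)/d) = Real.sqrt ((N d:ℝ)-1) / Real.sqrt d :=
      Real.sqrt_div hQp.le d
    have hsN : (0:ℝ) < Real.sqrt ((N d:ℝ)-1) := Real.sqrt_pos.mpr hQp
    rw [hsq]
    field_simp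
    ring
  have hP : Tendsto (fun d : ℕ => ((d:ℝ)-1)/d) atTop (𝓝 1) := by
    have h0 : Tendsto (fun d : ℕ => 1 - 1/(d:ℝ)) atTop (𝓝 (1 - 0)) :=
      tendsto_const_nhds.sub tendsto_one_div_atTop_nhds_zero_nat
    norm_num at h0
    apply Tendsto.congr' _ h0
    filter_upwards [eventually_ge_atTop 1] with d hd
    have hdpos : (0:ℝ) < d := by exact_mod_cast hd
    field_simp
  have H2 : Tendsto (fun d => (kk d:ℝ)/((kk d:ℝ)+jj d+1)) atTop (𝓝 (1/2)) := by
    have hlim : Tendsto (fun d : ℕ => (((d:ℝ)-1)/d)/(((N d:ℝ)-1)/d)) atTop (𝓝 (1/2)) :=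
      hP.div hQ (by norm_num)
    apply Tendsto.congr' _ hlim
    filter_upwards [eventually_ge_atTop 1, hQpos] with d hd hQp
    have hdpos : (0:ℝ) < d := by exact_mod_cast hd
    rw [c3 d hd, c1 d hd]
    have hNne : ((N d:ℝ) - 1) ≠ 0 := ne_of_gt hQp
    field_simp
  -- the two integral limits
  have hNUM := conv kk jj a (Set.Ioi 0) hn H1 H2
  have hDEN := conv kk jj a Set.univ hn H1 H2
  rw [MeasureTheory.setIntegral_univ] at hDEN
  have hDEN' : Tendsto (fun d => ∫ u : ℝ,
      (Set.Ioc (-Real.sqrt ((kk d:ℝ)+jj d+1)) (Real.sqrt ((kk d:ℝ)+jj d+1))).indicator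
        (fun u => (1+u/Real.sqrt ((kk d:ℝ)+jj d+1))^(kk d)
          * (1-u/Real.sqrt ((kk d:ℝ)+jj d+1))^(jj d)) u)
      atTop (𝓝 (∫ u : ℝ, Real.exp (a*u - u^2/2))) := by
    apply Tendsto.congr _ hDEN
    intro d
    rw [MeasureTheory.setIntegral_univ]
  have hDenPos : (0:ℝ) < ∫ u : ℝ, Real.exp (a*u - u^2/2) := by
    rw [gauss_whole']
    have := Real.sqrt_pos.mpr (show (0:ℝ) < 2*Real.pi by positivity)
    positivity
  have hvalue : (∫ u in Set.Ioi (0:ℝ), Real.exp (a*u - u^2/2))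
      / (∫ u : ℝ, Real.exp (a*u - u^2/2)) = stdNormalCDF a := by
    rw [gauss_half', gauss_whole', mul_div_mul_left _ _ (Real.exp_ne_zero _)]
    rw [stdNormalCDF]
    rw [div_eq_inv_mul]
  have hT : Tendsto (fun d => (∫ u in Set.Ioi (0:ℝ),
      (Set.Ioc (-Real.sqrt ((kk d:ℝ)+jj d+1)) (Real.sqrt ((kk d:ℝ)+jj d+1))).indicator
        (fun u => (1+u/Real.sqrt ((kk d:ℝ)+jj d+1))^(kk d)
          * (1-u/Real.sqrt ((kk d:ℝ)+jj d+1))^(jj d)) u)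
      / (∫ u : ℝ,
      (Set.Ioc (-Real.sqrt ((kk d:ℝ)+jj d+1)) (Real.sqrt ((kk d:ℝ)+jj d+1))).indicator
        (fun u => (1+u/Real.sqrt ((kk d:ℝ)+jj d+1))^(kk d)
          * (1-u/Real.sqrt ((kk d:ℝ)+jj d+1))^(jj d)) u))
      atTop (𝓝 (stdNormalCDF a)) := by
    rw [← hvalue]
    exact hNUM.div hDEN' (ne_of_gt hDenPos)
  constructor
  · apply Tendsto.congr' _ hT
    filter_upwards [eventually_ge_atTop 1] with d hd
    have hd1 : kk d + 1 = d := by simp only [hkk_def]; omega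
    have hklt : kk d < N d - 1 := by
      have := hN d; simp only [hkk_def]; omega
    have hexp : N d - 1 - 1 - kk d = jj d := by
      have := hN d; simp only [hkk_def, hjj_def]; omega
    have hcast : ((kk d:ℝ) + jj d + 1) = ((N d - 1 : ℕ):ℝ) := by
      rw [c3 d hd, Nat.cast_sub (by omega : 1 ≤ N d)]; norm_num
    rw [show wendelP d (N d)
        = (∑ i ∈ Finset.range (kk d + 1), ((N d - 1).choose i : ℝ)) / 2 ^ (N d - 1) from by
      rw [hd1]; rfl]
    rw [wendel_eq_ratio (N d - 1) (kk d) hklt, hexp]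
    rw [bridge (kk d) (jj d)]
  · rw [stdNormalCDF]
    have h2pi : (0:ℝ) < Real.sqrt (2*Real.pi) :=
      Real.sqrt_pos.mpr (by positivity)
    constructor
    · have := gauss_Iic_pos (-c / Real.sqrt 2)
      positivity
    · have hX := gauss_Iic_lt (-c / Real.sqrt 2)
      calc (Real.sqrt (2*Real.pi))⁻¹ * ∫ t in Set.Iic (-c / Real.sqrt 2), Real.exp (-t^2/2)
          < (Real.sqrt (2*Real.pi))⁻¹ * Real.sqrt (2*Real.pi) :=
            mul_lt_mul_of_pos_left hX (by positivity)
        _ = 1 := inv_mul_cancel₀ (ne_of_gt h2pi)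


end WendelMain
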